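/- arXiv:1511.03234 — 5 statements merged into one kernel-verified Lean document; each statement's English description precedes it below -/
import Mathlib

section
/- A reduction structure 𝒥 is ordered if and only if it is noetherian, where noetherian means: for every commutative ring A and every marked set F on 𝒥 over A, every sequence of →_{F𝒥} reduction steps terminates. -/
open MvPolynomial

/-- Terms (monomials) in `n` variables, identified with their exponent vectors. -/
abbrev Term (n : ℕ) := Fin n →₀ ℕ

/-- A reduction structure `𝒥 = (M, λ, τ)`. -/
structure RedStruct (n : ℕ) where
  M : Finset (Term n)
  tau : Term n → Set (Term n)
  lam : Term n → Finset (Term n)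
  tau_orderIdeal : ∀ α ∈ M, ∀ η ∈ tau α, ∀ η' : Term n, η' ≤ η → η' ∈ tau α
  cover : ∀ β : Term n, (∃ α ∈ M, ∃ η, β = α + η) ↔ (∃ α ∈ M, ∃ η ∈ tau α, β = α + η)
  lam_tail : ∀ α ∈ M, ∀ γ ∈ lam α, ¬ ∃ η ∈ tau α, γ = α + η

namespace RedStruct

variable {n : ℕ}

/-- The cone of `x^α`. -/
def cone (𝒥 : RedStruct n) (α : Term n) : Set (Term n) := {β | ∃ η ∈ 𝒥.tau α, β = α + η}

/-- The semigroup ideal `J` generated by `M`. -/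
def idealJ (𝒥 : RedStruct n) : Set (Term n) := {β | ∃ α ∈ 𝒥.M, ∃ η, β = α + η}

def hasMaximalCones (𝒥 : RedStruct n) : Prop := ∀ α ∈ 𝒥.M, 𝒥.tau α = Set.univ

def hasDisjointCones (𝒥 : RedStruct n) : Prop :=
  ∀ α ∈ 𝒥.M, ∀ α' ∈ 𝒥.M, α ≠ α' → 𝒥.cone α ∩ 𝒥.cone α' = ∅

/-- `𝒥'` is a substructure of `𝒥`: same `M`, same tails, smaller multiplicative sets. -/
def IsSubstructure (𝒥' 𝒥 : RedStruct n) : Prop :=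
  𝒥'.M = 𝒥.M ∧ 𝒥'.lam = 𝒥.lam ∧ ∀ α ∈ 𝒥.M, 𝒥'.tau α ⊆ 𝒥.tau α

/-- An ordered reduction structure: there are a well-founded strictly (partially) ordered set
`(W, ≺)` and an ordering function `φ` with `φ(x^{γ+η}) ≺ φ(x^{α+η})` for all `x^α ∈ M`,
`x^γ ∈ λ_α`, `x^η ∈ τ_α`. -/
def IsOrdered (𝒥 : RedStruct n) : Prop :=
  ∃ (W : Type) (lt : W → W → Prop) (φ : Term n → W),
    IsStrictOrder W lt ∧ WellFounded lt ∧
      ∀ α ∈ 𝒥.M, ∀ γ ∈ 𝒥.lam α, ∀ η ∈ 𝒥.tau α, lt (φ (γ + η)) (φ (α + η))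

end RedStruct

variable {n : ℕ}

/-- A marked set on `𝒥` over the ring `A`: each `f_α = x^α + Σ_{γ ∈ λ_α} c γ x^γ`. -/
def IsMarkedSet {A : Type*} [CommRing A] (𝒥 : RedStruct n)
    (F : Term n → MvPolynomial (Fin n) A) : Prop :=
  ∀ α ∈ 𝒥.M, MvPolynomial.coeff α (F α) = 1 ∧
    ∀ β : Term n, MvPolynomial.coeff β (F α) ≠ 0 → β = α ∨ β ∈ 𝒥.lam α

/-- One base step of reduction, allowing multipliers from the family `σ`. -/
def RedStep {A : Type*} [CommRing A] (𝒥 : RedStruct n) (σ : Term n → Set (Term n))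
    (F : Term n → MvPolynomial (Fin n) A) (g h : MvPolynomial (Fin n) A) : Prop :=
  ∃ α ∈ 𝒥.M, ∃ η ∈ σ α, MvPolynomial.coeff (α + η) g ≠ 0 ∧
    h = g - MvPolynomial.monomial η (MvPolynomial.coeff (α + η) g) * F α

/-- The reduction relation `→_{F𝒥}`. -/
def Red {A : Type*} [CommRing A] (𝒥 : RedStruct n) (F : Term n → MvPolynomial (Fin n) A) :
    MvPolynomial (Fin n) A → MvPolynomial (Fin n) A → Prop :=
  RedStep 𝒥 𝒥.tau F

/-- The reflexive-transitive closure `→_*` of `→_{F𝒥}`. -/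
def RedStar {A : Type*} [CommRing A] (𝒥 : RedStruct n) (F : Term n → MvPolynomial (Fin n) A) :
    MvPolynomial (Fin n) A → MvPolynomial (Fin n) A → Prop :=
  Relation.ReflTransGen (Red 𝒥 F)

/-- A polynomial is reduced if its support is contained in `N(J)`. -/
def IsReducedPoly {A : Type*} [CommRing A] (𝒥 : RedStruct n)
    (l : MvPolynomial (Fin n) A) : Prop :=
  ∀ β ∈ l.support, β ∉ 𝒥.idealJ

/-- A relation is noetherian: there is no infinite chain of steps. -/
def RelNoetherian {X : Type*} (r : X → X → Prop) : Prop :=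
  ¬ ∃ f : ℕ → X, ∀ i, r (f i) (f (i + 1))

/-- `𝒥` is noetherian over `A`: for every marked set `F` on `𝒥` over `A`, every sequence
of `→_{F𝒥}` reduction steps terminates. -/
def RedStruct.IsNoetherianOver (𝒥 : RedStruct n) (A : Type*) [CommRing A] : Prop :=
  ∀ F : Term n → MvPolynomial (Fin n) A, IsMarkedSet 𝒥 F → RelNoetherian (Red 𝒥 F)

/-- `𝒥` is weakly noetherian over `A`: it has a noetherian substructure. -/
def RedStruct.IsWeaklyNoetherianOver (𝒥 : RedStruct n) (A : Type*) [CommRing A] : Prop :=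
  ∃ 𝒥' : RedStruct n, RedStruct.IsSubstructure 𝒥' 𝒥 ∧ 𝒥'.IsNoetherianOver A

/-- The set `σF = {x^η f_α : x^α ∈ M, x^η ∈ σ_α}`. -/
def tauF {A : Type*} [CommRing A] (𝒥 : RedStruct n) (σ : Term n → Set (Term n))
    (F : Term n → MvPolynomial (Fin n) A) : Set (MvPolynomial (Fin n) A) :=
  {p | ∃ α ∈ 𝒥.M, ∃ η ∈ σ α, p = MvPolynomial.monomial η (1 : A) * F α}

/-- The `A`-submodule `⟨σF⟩` generated by `σF`. -/
noncomputable def tauSpan {A : Type*} [CommRing A] (𝒥 : RedStruct n) (σ : Term n → Set (Term n))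
    (F : Term n → MvPolynomial (Fin n) A) : Submodule A (MvPolynomial (Fin n) A) :=
  Submodule.span A (tauF 𝒥 σ F)

/-- The `A`-submodule `⟨N(J)⟩` spanned by the terms outside `J`. -/
noncomputable def NJSpan (𝒥 : RedStruct n) (A : Type*) [CommRing A] :
    Submodule A (MvPolynomial (Fin n) A) :=
  Submodule.span A {p | ∃ β ∉ 𝒥.idealJ, p = MvPolynomial.monomial β (1 : A)}

/-- `F` is a marked basis: `(F) ⊕ ⟨N(J)⟩ = P` as `A`-modules. -/
def IsMarkedBasis {A : Type*} [CommRing A] (𝒥 : RedStruct n)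
    (F : Term n → MvPolynomial (Fin n) A) : Prop :=
  IsCompl (Submodule.restrictScalars A (Ideal.span (F '' ↑𝒥.M))) (NJSpan 𝒥 A)

/-- A representation of `g` by `σF`: `g = Σ c_(α,η) · x^η f_α` over finitely many
distinct pairs `(α, η)` with `x^α ∈ M`, `x^η ∈ σ_α` and nonzero coefficients. -/
def IsRepr {A : Type*} [CommRing A] (𝒥 : RedStruct n) (σ : Term n → Set (Term n))
    (F : Term n → MvPolynomial (Fin n) A) (c : (Term n × Term n) →₀ A)
    (g : MvPolynomial (Fin n) A) : Prop :=
  (∀ p ∈ c.support, p.1 ∈ 𝒥.M ∧ p.2 ∈ σ p.1) ∧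
    g = c.sum fun p a => MvPolynomial.monomial p.2 a * F p.1

/-- The S-polynomial `S(f_β, f_α) = (lcm(x^α,x^β)/x^α) f_α − (lcm(x^α,x^β)/x^β) f_β`,
written `SPoly F α β`. -/
noncomputable def SPoly {A : Type*} [CommRing A] (F : Term n → MvPolynomial (Fin n) A) (α β : Term n) :
    MvPolynomial (Fin n) A :=
  MvPolynomial.monomial ((α ⊔ β) - α) (1 : A) * F α -
    MvPolynomial.monomial ((α ⊔ β) - β) (1 : A) * F β

/-!
Both conditions are equivalent to the well-foundedness of the relation `TailRel` on terms,
which relates `x^(α+η)`, for `x^η ∈ τ_α`, to `x^(γ+η)` for every tail term `x^γ ∈ λ_α`.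

If `TailRel` is well-founded, a reduction step removes one term `x^(α+η)` from the support and
only adds `TailRel`-smaller terms, so supports decrease for the multiset extension
`Relation.CutExpand` of `TailRel`, which is well-founded.

Conversely, an infinite descending chain `t₀, t₁, …` of `TailRel` is followed by an infinite
reduction sequence for the marked set `f_α = x^α - X · Σ_{γ ∈ λ_α} x^γ` over `ℤ[X]`: by induction,
all coefficients of the `i`-th polynomial have degree at most `i` in `X`, and the coefficient
of `x^(tᵢ)` has `X^i`-coefficient `1`, so it never vanishes.
-/

namespace Relation

variable {α : Type*} {r : α → α → Prop}

theorem reflTransGen_cutExpand_add (s u : Multiset α) :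
    ReflTransGen (CutExpand r) s (s + u) := by
  induction u using Multiset.induction with
  | empty => rw [add_zero]
  | cons b u ih =>
    refine ih.tail ((cutExpand_add_left s).mpr ?_)
    rw [← Multiset.singleton_add]
    simpa using (cutExpand_add_right (r := r) u).mpr cutExpand_zero

theorem reflTransGen_cutExpand_of_le {s t : Multiset α} (h : s ≤ t) :
    ReflTransGen (CutExpand r) s t := by
  obtain ⟨u, rfl⟩ := Multiset.le_iff_exists_add.mp h
  exact reflTransGen_cutExpand_add s u

theorem transGen_cutExpand_finset_val {s t : Finset α} {a : α} (ha : a ∈ s) (hat : a ∉ t)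
    (hr : ∀ b ∈ t, b ∉ s → r b a) : TransGen (CutExpand r) t.val s.val := by
  classical
  have hdisj : Disjoint (s.erase a) (t \ s) :=
    Finset.disjoint_of_subset_left (Finset.erase_subset a s) Finset.disjoint_sdiff
  have hcut : CutExpand r ((s.erase a).disjUnion (t \ s) hdisj).val s.val := by
    refine ⟨(t \ s).val, a, fun b hb => ?_, ?_⟩
    · rw [Finset.mem_val, Finset.mem_sdiff] at hb
      exact hr b hb.1 hb.2
    · rw [Finset.disjUnion_val, add_right_comm, Finset.erase_val,
        Multiset.add_singleton_eq_iff.mpr ⟨ha, rfl⟩]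
  have hsub : t ⊆ (s.erase a).disjUnion (t \ s) hdisj := by
    intro b hb
    by_cases hbs : b ∈ s <;> simp [hb, hbs, ne_of_mem_of_not_mem hb hat]
  exact TransGen.tail' (reflTransGen_cutExpand_of_le (Finset.val_le_iff.mpr hsub)) hcut

end Relation

theorem relNoetherian_of_wellFounded_flip {X : Type*} {r : X → X → Prop}
    (h : WellFounded (flip r)) : RelNoetherian r := by
  rintro ⟨f, hf⟩
  exact (wellFounded_iff_isEmpty_descending_chain.mp h).false ⟨f, hf⟩

theorem MvPolynomial.natDegree_coeff_sub_monomial_mul_le {σ R : Type*} [CommRing R]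
    {g f : MvPolynomial σ (Polynomial R)} {c : Polynomial R} {d : ℕ} (η : σ →₀ ℕ)
    (hg : ∀ β, (coeff β g).natDegree ≤ d) (hc : c.natDegree ≤ d)
    (hf : ∀ β, (coeff β f).natDegree ≤ 1) (β : σ →₀ ℕ) :
    (coeff β (g - monomial η c * f)).natDegree ≤ d + 1 := by
  rw [coeff_sub, coeff_monomial_mul']
  refine (Polynomial.natDegree_sub_le _ _).trans (max_le ((hg β).trans d.le_succ) ?_)
  split_ifs
  · exact Polynomial.natDegree_mul_le.trans (add_le_add hc (hf _))
  · simp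

namespace RedStruct

variable {n : ℕ}

def TailRel (𝒥 : RedStruct n) (s t : Term n) : Prop :=
  ∃ α ∈ 𝒥.M, ∃ γ ∈ 𝒥.lam α, ∃ η ∈ 𝒥.tau α, t = α + η ∧ s = γ + η

theorem isOrdered_iff_wellFounded_tailRel (𝒥 : RedStruct n) :
    𝒥.IsOrdered ↔ WellFounded 𝒥.TailRel := by
  constructor
  · rintro ⟨W, lt, φ, -, hwf, hφ⟩
    refine Subrelation.wf (r := InvImage lt φ) ?_ (InvImage.wf φ hwf)
    rintro s t ⟨α, hα, γ, hγ, η, hη, rfl, rfl⟩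
    exact hφ α hα γ hγ η hη
  · intro hwf
    refine ⟨Term n, Relation.TransGen 𝒥.TailRel, id,
      { toIrrefl := hwf.transGen.irrefl, trans := fun _ _ _ => .trans },
      hwf.transGen, fun α hα γ hγ η hη => .single ⟨α, hα, γ, hγ, η, hη, rfl, rfl⟩⟩

theorem zero_mem_tau (𝒥 : RedStruct n) {α η : Term n} (hα : α ∈ 𝒥.M) (hη : η ∈ 𝒥.tau α) :
    0 ∈ 𝒥.tau α :=
  𝒥.tau_orderIdeal α hα η hη 0 zero_le

theorem ne_of_mem_lam (𝒥 : RedStruct n) {α γ η : Term n} (hα : α ∈ 𝒥.M) (hγ : γ ∈ 𝒥.lam α)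
    (hη : η ∈ 𝒥.tau α) : γ ≠ α := by
  rintro rfl
  exact 𝒥.lam_tail γ hα γ hγ ⟨0, 𝒥.zero_mem_tau hα hη, (add_zero γ).symm⟩

end RedStruct

section Noetherian

variable {n : ℕ} {A : Type*} [CommRing A] {𝒥 : RedStruct n} {F : Term n → MvPolynomial (Fin n) A}

theorem Red.transGen_cutExpand_support (hF : IsMarkedSet 𝒥 F) {g h : MvPolynomial (Fin n) A}
    (hgh : Red 𝒥 F g h) :
    Relation.TransGen (Relation.CutExpand 𝒥.TailRel) h.support.val g.support.val := by
  obtain ⟨α, hα, η, hη, hc, rfl⟩ := hgh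
  refine Relation.transGen_cutExpand_finset_val (mem_support_iff.mpr hc) ?_ fun b hb hbg => ?_
  · rw [mem_support_iff, not_not, coeff_sub, add_comm α η, coeff_monomial_mul, (hF α hα).1,
      mul_one, sub_self]
  · rw [mem_support_iff, coeff_sub, notMem_support_iff.mp hbg, zero_sub, neg_ne_zero,
      coeff_monomial_mul'] at hb
    split_ifs at hb with hle
    · obtain rfl | hlam := (hF α hα).2 (b - η) (right_ne_zero_of_mul hb)
      · rw [tsub_add_cancel_of_le hle] at hc
        exact absurd (mem_support_iff.mpr hc) hbg
      · exact ⟨α, hα, b - η, hlam, η, hη, rfl, (tsub_add_cancel_of_le hle).symm⟩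
    · exact absurd rfl hb

theorem relNoetherian_red_of_wellFounded (hwf : WellFounded 𝒥.TailRel) (hF : IsMarkedSet 𝒥 F) :
    RelNoetherian (Red 𝒥 F) := by
  refine relNoetherian_of_wellFounded_flip <|
    Subrelation.wf ?_ (InvImage.wf (fun g => g.support.val) hwf.cutExpand.transGen)
  exact fun hgh => hgh.transGen_cutExpand_support hF

end Noetherian

namespace RedStruct

variable {n : ℕ} (𝒥 : RedStruct n) (R : Type*) [CommRing R]

noncomputable def genericMarkedSet (α : Term n) : MvPolynomial (Fin n) (Polynomial R) :=
  monomial α 1 - ∑ γ ∈ (𝒥.lam α).erase α, monomial γ Polynomial.X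

variable {𝒥 R}

theorem coeff_genericMarkedSet (α β : Term n) :
    coeff β (𝒥.genericMarkedSet R α) =
      (if β = α then 1 else 0) - if β ∈ (𝒥.lam α).erase α then Polynomial.X else 0 := by
  simp only [genericMarkedSet, coeff_sub, coeff_sum, coeff_monomial, Finset.sum_ite_eq',
    eq_comm (a := α)]

theorem isMarkedSet_genericMarkedSet : IsMarkedSet 𝒥 (𝒥.genericMarkedSet R) := by
  refine fun α _ => ⟨by simp [coeff_genericMarkedSet], fun β hβ => ?_⟩
  rw [coeff_genericMarkedSet] at hβ
  by_cases hβα : β = α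
  · exact .inl hβα
  · by_cases hβlam : β ∈ (𝒥.lam α).erase α
    · exact .inr (Finset.mem_of_mem_erase hβlam)
    · simp [hβα, hβlam] at hβ

theorem natDegree_coeff_genericMarkedSet_le (α β : Term n) :
    (coeff β (𝒥.genericMarkedSet R α)).natDegree ≤ 1 := by
  rw [coeff_genericMarkedSet]
  refine (Polynomial.natDegree_sub_le _ _).trans (max_le ?_ ?_) <;> split_ifs <;>
    simp [Polynomial.natDegree_X_le]

theorem coeff_coeff_sub_monomial_mul_genericMarkedSet {g : MvPolynomial (Fin n) (Polynomial R)}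
    {d : ℕ} {α γ η : Term n} (hα : α ∈ 𝒥.M) (hγ : γ ∈ 𝒥.lam α) (hη : η ∈ 𝒥.tau α)
    (hg : ∀ β, (coeff β g).natDegree ≤ d) (c : Polynomial R) :
    (coeff (γ + η) (g - monomial η c * 𝒥.genericMarkedSet R α)).coeff (d + 1) = c.coeff d := by
  have hγα := 𝒥.ne_of_mem_lam hα hγ hη
  rw [coeff_sub, add_comm γ η, coeff_monomial_mul, coeff_genericMarkedSet, if_neg hγα,
    if_pos (Finset.mem_erase.mpr ⟨hγα, hγ⟩), Polynomial.coeff_sub,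
    Polynomial.coeff_eq_zero_of_natDegree_lt ((hg _).trans_lt d.lt_succ_self)]
  simp

theorem not_relNoetherian_red_genericMarkedSet [Nontrivial R] (hwf : ¬ WellFounded 𝒥.TailRel) :
    ¬ RelNoetherian (Red 𝒥 (𝒥.genericMarkedSet R)) := by
  obtain ⟨t, ht⟩ := not_isEmpty_iff.mp (mt wellFounded_iff_isEmpty_descending_chain.mpr hwf)
  choose a ha γ hγ η hη hta htγ using ht
  let g : ℕ → MvPolynomial (Fin n) (Polynomial R) := fun i => Nat.rec (monomial (t 0) 1)
    (fun i gi => gi - monomial (η i) (coeff (t i) gi) * 𝒥.genericMarkedSet R (a i)) i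
  have hg : ∀ i, (∀ β, (coeff β (g i)).natDegree ≤ i) ∧ (coeff (t i) (g i)).coeff i = 1 := by
    intro i
    induction i with
    | zero =>
      have hg0 : g 0 = monomial (t 0) 1 := rfl
      refine ⟨fun β => ?_, by simp [hg0]⟩
      rw [hg0, coeff_monomial]
      split_ifs <;> simp
    | succ i ih =>
      refine ⟨natDegree_coeff_sub_monomial_mul_le _ ih.1 (ih.1 _)
        (natDegree_coeff_genericMarkedSet_le _), ?_⟩
      show (coeff (t (i + 1)) (g i - _)).coeff (i + 1) = 1
      rw [htγ i, coeff_coeff_sub_monomial_mul_genericMarkedSet (ha i) (hγ i) (hη i) ih.1]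
      exact ih.2
  refine fun hN => hN ⟨g, fun i => ⟨a i, ha i, η i, hη i, ?_, ?_⟩⟩
  · rw [← hta i]
    exact fun h0 => by simpa [h0] using (hg i).2
  · rw [← hta i]

end RedStruct

/-- a reduction structure is ordered iff it is noetherian (i.e. for every
commutative ring `A` and every marked set `F` on `𝒥` over `A`, every sequence of
`→_{F𝒥}` reduction steps terminates). -/
theorem stmt1 {n : ℕ} (𝒥 : RedStruct n) :
    𝒥.IsOrdered ↔ ∀ (A : Type) [CommRing A], 𝒥.IsNoetherianOver A := by
  rw [RedStruct.isOrdered_iff_wellFounded_tailRel]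
  refine ⟨fun hwf A _ F hF => relNoetherian_red_of_wellFounded hwf hF, fun hN => ?_⟩
  by_contra hwf
  exact RedStruct.not_relNoetherian_red_genericMarkedSet (R := ℤ) hwf
    (hN _ _ RedStruct.isMarkedSet_genericMarkedSet)
end

section
/- Let F be a marked set over a weakly noetherian reduction structure 𝒥 and let g ∈ P. Then there exists a reduced polynomial l with g →_* l, and g − l has a representation by τF, i.e. g − l = Σ_{i=1}^r c_i x^{η_i} f_{α_i} with c_i ∈ A and the x^{η_i} f_{α_i} distinct elements of τF. -/
open MvPolynomial

variable {n : ℕ}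

/-!
Reduce `g` with respect to a noetherian substructure `𝒥'` as long as possible, by well-founded
induction on `→_{F𝒥'}`: a polynomial that is not reduced has a term in `J`, which lies in some
cone of `𝒥'` and can therefore be reduced. The multipliers `c(g, x^{α+η}) x^η` of the steps taken
form the representation of `g - l`, and since `τ'_α ⊆ τ_α`, every `𝒥'`-step is a `𝒥`-step.
-/

theorem RelNoetherian.wellFounded_flip {X : Type*} {r : X → X → Prop} (h : RelNoetherian r) :
    WellFounded (flip r) :=
  wellFounded_iff_isEmpty_descending_chain.mpr ⟨fun ⟨f, hf⟩ => h ⟨f, hf⟩⟩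

section Reduction

variable {A : Type*} [CommRing A] {𝒥 : RedStruct n} {F : Term n → MvPolynomial (Fin n) A}

theorem isRepr_zero (σ : Term n → Set (Term n)) : IsRepr 𝒥 σ F 0 0 := by
  simp [IsRepr]

theorem IsRepr.of_redStep {σ : Term n → Set (Term n)} {c : (Term n × Term n) →₀ A}
    {g l : MvPolynomial (Fin n) A} {α η : Term n} (hα : α ∈ 𝒥.M) (hη : η ∈ σ α)
    (hc : IsRepr 𝒥 σ F c (g - monomial η (coeff (α + η) g) * F α - l)) :
    IsRepr 𝒥 σ F (c + Finsupp.single (α, η) (coeff (α + η) g)) (g - l) := by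
  classical
  obtain ⟨hsupp, hsum⟩ := hc
  refine ⟨fun p hp => ?_, ?_⟩
  · rcases Finset.mem_union.mp (Finsupp.support_add hp) with hp | hp
    · exact hsupp p hp
    · obtain rfl := (Finsupp.mem_support_single _ _ _).mp hp |>.1
      exact ⟨hα, hη⟩
  · rw [Finsupp.sum_add_index' (fun _ => by simp) (fun _ _ _ => by simp [add_mul]),
      Finsupp.sum_single_index (by simp), ← hsum]
    ring

theorem exists_red_of_not_isReducedPoly {g : MvPolynomial (Fin n) A}
    (hg : ¬ IsReducedPoly 𝒥 g) : ∃ h, Red 𝒥 F g h := by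
  simp only [IsReducedPoly, not_forall, not_not] at hg
  obtain ⟨β, hβg, hβJ⟩ := hg
  obtain ⟨α, hα, η, hη, rfl⟩ := (𝒥.cover β).mp hβJ
  exact ⟨_, α, hα, η, hη, mem_support_iff.mp hβg, rfl⟩

theorem exists_reduced_of_relNoetherian (hF : RelNoetherian (Red 𝒥 F))
    (g : MvPolynomial (Fin n) A) :
    ∃ l, RedStar 𝒥 F g l ∧ IsReducedPoly 𝒥 l ∧ ∃ c, IsRepr 𝒥 𝒥.tau F c (g - l) := by
  induction g using hF.wellFounded_flip.induction with
  | _ g ih =>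
    by_cases hg : IsReducedPoly 𝒥 g
    · exact ⟨g, .refl, hg, 0, by simpa using isRepr_zero 𝒥.tau⟩
    obtain ⟨h, hgh⟩ := exists_red_of_not_isReducedPoly (F := F) hg
    obtain ⟨l, hhl, hl, c, hc⟩ := ih h hgh
    refine ⟨l, .head hgh hhl, hl, ?_⟩
    obtain ⟨α, hα, η, hη, -, rfl⟩ := hgh
    exact ⟨_, hc.of_redStep hα hη⟩

end Reduction

namespace RedStruct.IsSubstructure

variable {A : Type*} [CommRing A] {𝒥' 𝒥 : RedStruct n} {F : Term n → MvPolynomial (Fin n) A}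

theorem isMarkedSet (h : 𝒥'.IsSubstructure 𝒥) (hF : IsMarkedSet 𝒥 F) : IsMarkedSet 𝒥' F := by
  rw [IsMarkedSet, h.1, h.2.1]
  exact hF

theorem red {g g' : MvPolynomial (Fin n) A} (h : 𝒥'.IsSubstructure 𝒥) (hg : Red 𝒥' F g g') :
    Red 𝒥 F g g' := by
  obtain ⟨α, hα, η, hη, hc, rfl⟩ := hg
  rw [h.1] at hα
  exact ⟨α, hα, η, h.2.2 α hα hη, hc, rfl⟩

theorem redStar {g g' : MvPolynomial (Fin n) A} (h : 𝒥'.IsSubstructure 𝒥)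
    (hg : RedStar 𝒥' F g g') : RedStar 𝒥 F g g' :=
  Relation.ReflTransGen.mono (fun _ _ => h.red) _ _ hg

theorem isReducedPoly {l : MvPolynomial (Fin n) A} (h : 𝒥'.IsSubstructure 𝒥)
    (hl : IsReducedPoly 𝒥' l) : IsReducedPoly 𝒥 l := by
  rwa [IsReducedPoly, RedStruct.idealJ, ← h.1]

theorem isRepr {c : (Term n × Term n) →₀ A} {g : MvPolynomial (Fin n) A}
    (h : 𝒥'.IsSubstructure 𝒥) (hc : IsRepr 𝒥' 𝒥'.tau F c g) : IsRepr 𝒥 𝒥.tau F c g := by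
  obtain ⟨hsupp, hsum⟩ := hc
  refine ⟨fun p hp => ?_, hsum⟩
  obtain ⟨hα, hη⟩ := hsupp p hp
  rw [h.1] at hα
  exact ⟨hα, h.2.2 _ hα hη⟩

end RedStruct.IsSubstructure

/-- over a weakly noetherian RS, every polynomial `g` has a reduced form `l`
obtained by `F`, and `g − l` has a representation by `τF`. -/
theorem stmt3 {n : ℕ} {A : Type} [CommRing A] (𝒥 : RedStruct n)
    (hwn : 𝒥.IsWeaklyNoetherianOver A)
    (F : Term n → MvPolynomial (Fin n) A) (hF : IsMarkedSet 𝒥 F)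
    (g : MvPolynomial (Fin n) A) :
    ∃ l : MvPolynomial (Fin n) A, RedStar 𝒥 F g l ∧ IsReducedPoly 𝒥 l ∧
      ∃ c : (Term n × Term n) →₀ A, IsRepr 𝒥 𝒥.tau F c (g - l) := by
  obtain ⟨𝒥', hsub, hnoeth⟩ := hwn
  obtain ⟨l, hgl, hl, c, hc⟩ :=
    exists_reduced_of_relNoetherian (hnoeth F (hsub.isMarkedSet hF)) g
  exact ⟨l, hsub.redStar hgl, hsub.isReducedPoly hl, c, hsub.isRepr hc⟩
end

section
/- Let F be a marked set over a weakly noetherian reduction structure 𝒥. Then ⟨τF⟩ + ⟨N(J)⟩ = P. If moreover 𝒥 has disjoint cones, then ⟨τF⟩ ⊕ ⟨N(J)⟩ = P, and for all g, l ∈ P with supp(l) ⊆ N(J) one has: g − l ∈ ⟨τF⟩ if and only if g →_* l. -/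
open MvPolynomial

variable {n : ℕ}

/-!
Noetherianity gives normal forms, hence `⟨τF⟩ + ⟨N(J)⟩ = P`; with disjoint cones a substructure
has the same cones, so weak noetherianity is noetherianity, and everything else follows once a
reduced element `x = Σ c_{α,η} x^η f_α` of `⟨τF⟩` is shown to vanish.

Draw an edge `(α, η) → (α', η')` when `α' + η' = γ + η` for some `γ ∈ λ_α`. Heads
of distinct pairs are distinct, so a pair of the support of `c` without predecessor in that support
puts its coefficient unchanged on its head, where the reduced `x` has coefficient `0`. Hence if
`c ≠ 0` its support contains a cycle, and a shortest cycle has no chords. Along a chordless cycle,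
reducing with the marked set `x^α - Σ_{γ ∈ λ_α} x^γ` passes a single monomial around the cycle
forever, contradicting noetherianity.
-/

open Function

namespace Relation

variable {α : Type*} (r : α → α → Prop)

/-- `f` runs periodically, with period `P`, around a closed `r`-walk. -/
def IsCycle (f : ℕ → α) (P : ℕ) : Prop :=
  0 < P ∧ Periodic f P ∧ ∀ j, r (f j) (f (j + 1))

def IsChordless (f : ℕ → α) : Prop :=
  ∀ i k, r (f i) (f k) → f k = f (i + 1)

variable {r}

theorem isCycle_of_closed_walk {w : ℕ → α} {P : ℕ} (hP : 0 < P)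
    (hstep : ∀ j, j + 1 < P → r (w j) (w (j + 1))) (hclose : r (w (P - 1)) (w 0)) :
    IsCycle r (fun j => w (j % P)) P := by
  refine ⟨hP, fun j => by simp only [Nat.add_mod_right], fun j => ?_⟩
  have hj := Nat.mod_lt j hP
  show r (w (j % P)) (w ((j + 1) % P))
  rw [← Nat.mod_add_mod j P 1]
  rcases Nat.lt_or_ge (j % P + 1) P with h | h
  · rw [Nat.mod_eq_of_lt h]
    exact hstep _ h
  · rw [show j % P + 1 = P by omega, Nat.mod_self, show j % P = P - 1 by omega]
    exact hclose

theorem IsCycle.shift {f : ℕ → α} {P : ℕ} (hf : IsCycle r f P) (k : ℕ) :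
    IsCycle r (fun j => f (j + k)) P :=
  ⟨hf.1, fun j => by simp only [add_right_comm j P k, hf.2.1 (j + k)],
    fun j => by simpa only [add_right_comm j 1 k] using hf.2.2 (j + k)⟩

theorem IsCycle.exists_shorter_of_chord_zero {f : ℕ → α} {P i : ℕ} (hf : IsCycle r f P)
    (hchord : r (f i) (f 0)) (hne : f 0 ≠ f (i + 1)) : ∃ g Q, Q < P ∧ IsCycle r g Q := by
  have hper := hf.2.1
  have hi : i % P < P := Nat.mod_lt i hf.1
  have hfi : f (i % P) = f i := hper.map_mod_nat i
  have hfi' : f (i % P + 1) = f (i + 1) := by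
    rw [← hper.map_mod_nat (i % P + 1), Nat.mod_add_mod, hper.map_mod_nat]
  have hlt : i % P + 1 < P := by
    refine lt_of_le_of_ne hi fun h => hne ?_
    rw [← hfi', h, ← zero_add P, hper 0]
  refine ⟨_, i % P + 1, hlt, isCycle_of_closed_walk (Nat.succ_pos _) (fun j _ => hf.2.2 j) ?_⟩
  rw [Nat.add_sub_cancel, hfi]
  exact hchord

theorem IsCycle.exists_shorter_of_chord {f : ℕ → α} {P i k : ℕ} (hf : IsCycle r f P)
    (hchord : r (f i) (f k)) (hne : f k ≠ f (i + 1)) : ∃ g Q, Q < P ∧ IsCycle r g Q := by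
  -- rotate the cycle so that the chord ends at position `0`
  have hrot : i + (P - 1) * k + k = i + k * P := by
    rw [add_assoc, ← Nat.succ_mul, Nat.succ_eq_add_one, Nat.sub_add_cancel hf.1, mul_comm]
  have hper : Periodic f (k * P) := by simpa only [smul_eq_mul] using hf.2.1.nsmul k
  have hfi : f (i + (P - 1) * k + k) = f i := by rw [hrot, hper i]
  have hfi' : f (i + (P - 1) * k + 1 + k) = f (i + 1) := by
    rw [add_right_comm, hrot, add_right_comm, hper]
  refine (hf.shift k).exists_shorter_of_chord_zero (i := i + (P - 1) * k) ?_ ?_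
  · simpa only [hfi, zero_add] using hchord
  · simpa only [hfi', zero_add] using hne

theorem IsCycle.exists_isChordless {f : ℕ → α} {P : ℕ} (hf : IsCycle r f P) :
    ∃ g : ℕ → α, (∀ j, r (g j) (g (j + 1))) ∧ IsChordless r g := by
  induction P using Nat.strong_induction_on generalizing f with
  | _ P ih =>
    by_cases hc : IsChordless r f
    · exact ⟨f, hf.2.2, hc⟩
    · simp only [IsChordless, not_forall] at hc
      obtain ⟨i, k, hchord, hne⟩ := hc
      obtain ⟨g, Q, hQ, hg⟩ := hf.exists_shorter_of_chord hchord hne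
      exact ih Q hQ hg

theorem exists_isCycle_of_forall_exists_pred {s : Finset α} (hs : s.Nonempty)
    (h : ∀ a ∈ s, ∃ b ∈ s, r b a) : ∃ f P, IsCycle r f P := by
  choose! pred hpred_mem hpred using h
  obtain ⟨a₀, ha₀⟩ := hs
  set b : ℕ → α := fun m => pred^[m] a₀
  have hb_succ : ∀ m, b (m + 1) = pred (b m) := fun m => iterate_succ_apply' pred m a₀
  have hb_mem : ∀ m, b m ∈ s := by
    intro m
    induction m with
    | zero => exact ha₀
    | succ m ih => rw [hb_succ]; exact hpred_mem _ ih
  obtain ⟨x, y, hxy, hbxy⟩ : ∃ x y, x < y ∧ b x = b y := by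
    obtain ⟨x, y, hne, heq⟩ :=
      Finite.exists_ne_map_eq_of_infinite fun m => (⟨b m, hb_mem m⟩ : s)
    rcases Nat.lt_or_gt_of_ne hne with h | h
    · exact ⟨x, y, h, congrArg Subtype.val heq⟩
    · exact ⟨y, x, h, congrArg Subtype.val heq.symm⟩
  -- walk backwards along `pred` from `b y` to `b x = b y`
  refine ⟨_, y - x, isCycle_of_closed_walk (w := fun j => b (y - j)) (by omega) (fun j hj => ?_) ?_⟩
  · rw [show y - j = y - (j + 1) + 1 by omega, hb_succ]
    exact hpred _ (hb_mem _)
  · rw [show y - (y - x - 1) = x + 1 by omega, hb_succ, Nat.sub_zero, ← hbxy]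
    exact hpred _ (hb_mem _)

end Relation

namespace RedStruct

variable (𝒥 : RedStruct n)

/-- `p = (α, η)` indexes the generator `x^η f_α` of `τF`. -/
def IsConePair (p : Term n × Term n) : Prop :=
  p.1 ∈ 𝒥.M ∧ p.2 ∈ 𝒥.tau p.1

/-- The head of the generator indexed by `q` is `x^{η+γ}` for a tail term `x^γ`, `γ ∈ λ_α`,
where `p = (α, η)`. -/
def TailEdge (p q : Term n × Term n) : Prop :=
  𝒥.IsConePair p ∧ 𝒥.IsConePair q ∧ p.2 ≤ q.1 + q.2 ∧ q.1 + q.2 - p.2 ∈ 𝒥.lam p.1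

variable {𝒥}

theorem IsConePair.head_mem_idealJ {p : Term n × Term n} (hp : 𝒥.IsConePair p) :
    p.1 + p.2 ∈ 𝒥.idealJ :=
  ⟨p.1, hp.1, p.2, rfl⟩

theorem IsConePair.fst_notMem_lam {p : Term n × Term n} (hp : 𝒥.IsConePair p) :
    p.1 ∉ 𝒥.lam p.1 := fun hmem =>
  𝒥.lam_tail p.1 hp.1 p.1 hmem
    ⟨0, 𝒥.tau_orderIdeal p.1 hp.1 p.2 hp.2 0 zero_le, (add_zero p.1).symm⟩

theorem eq_of_head_eq (hdc : 𝒥.hasDisjointCones) {p q : Term n × Term n}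
    (hp : 𝒥.IsConePair p) (hq : 𝒥.IsConePair q) (h : p.1 + p.2 = q.1 + q.2) : p = q := by
  have h1 : p.1 = q.1 := by
    by_contra hne
    have hmem : q.1 + q.2 ∈ 𝒥.cone p.1 ∩ 𝒥.cone q.1 := ⟨⟨p.2, hp.2, h.symm⟩, ⟨q.2, hq.2, rfl⟩⟩
    rwa [hdc p.1 hp.1 q.1 hq.1 hne] at hmem
  rw [h1] at h
  exact Prod.ext h1 (add_left_cancel h)

theorem not_tailEdge_self (p : Term n × Term n) : ¬ 𝒥.TailEdge p p := fun h =>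
  h.1.fst_notMem_lam (by simpa only [add_tsub_cancel_right] using h.2.2.2)

namespace IsSubstructure

variable {𝒥' : RedStruct n} (hsub : 𝒥'.IsSubstructure 𝒥)
include hsub

theorem idealJ_eq : 𝒥'.idealJ = 𝒥.idealJ := by
  rw [idealJ, idealJ, hsub.1]

theorem isMarkedSet_iff {A : Type*} [CommRing A] {F : Term n → MvPolynomial (Fin n) A} :
    IsMarkedSet 𝒥' F ↔ IsMarkedSet 𝒥 F := by
  rw [IsMarkedSet, IsMarkedSet, hsub.1, hsub.2.1]

theorem tauSpan_le {A : Type*} [CommRing A] (F : Term n → MvPolynomial (Fin n) A) :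
    tauSpan 𝒥' 𝒥'.tau F ≤ tauSpan 𝒥 𝒥.tau F := by
  refine Submodule.span_mono ?_
  rintro _ ⟨α, hα, η, hη, rfl⟩
  rw [hsub.1] at hα
  exact ⟨α, hα, η, hsub.2.2 α hα hη, rfl⟩

/-- With disjoint cones the cones already partition `J`, so they cannot shrink. -/
theorem tau_eq (hdc : 𝒥.hasDisjointCones) {α : Term n} (hα : α ∈ 𝒥.M) :
    𝒥'.tau α = 𝒥.tau α := by
  refine (hsub.2.2 α hα).antisymm fun η hη => ?_
  obtain ⟨β, hβ, η', hη', heq⟩ := (𝒥'.cover (α + η)).mp ⟨α, hsub.1 ▸ hα, η, rfl⟩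
  rw [hsub.1] at hβ
  obtain ⟨rfl, rfl⟩ := Prod.ext_iff.mp <|
    eq_of_head_eq (p := (α, η)) (q := (β, η')) hdc ⟨hα, hη⟩ ⟨hβ, hsub.2.2 β hβ hη'⟩ heq
  exact hη'

theorem red_eq {A : Type*} [CommRing A] (hdc : 𝒥.hasDisjointCones)
    (F : Term n → MvPolynomial (Fin n) A) : Red 𝒥' F = Red 𝒥 F := by
  ext g h
  refine ⟨fun ⟨α, hα, η, hη, hc, he⟩ => ?_, fun ⟨α, hα, η, hη, hc, he⟩ => ?_⟩
  · rw [hsub.1] at hα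
    exact ⟨α, hα, η, hsub.tau_eq hdc hα ▸ hη, hc, he⟩
  · exact ⟨α, hsub.1 ▸ hα, η, (hsub.tau_eq hdc hα).symm ▸ hη, hc, he⟩

end IsSubstructure

theorem IsWeaklyNoetherianOver.isNoetherianOver {A : Type*} [CommRing A]
    (hwn : 𝒥.IsWeaklyNoetherianOver A) (hdc : 𝒥.hasDisjointCones) : 𝒥.IsNoetherianOver A := by
  obtain ⟨𝒥', hsub, hnoe⟩ := hwn
  intro F hF
  rw [← hsub.red_eq hdc]
  exact hnoe F (hsub.isMarkedSet_iff.mpr hF)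

end RedStruct

section Reduction

variable {A : Type*} [CommRing A] {𝒥 : RedStruct n}

theorem njSpan_eq_restrictSupport : NJSpan 𝒥 A = restrictSupport A 𝒥.idealJᶜ := by
  rw [restrictSupport_eq_span, NJSpan]
  congr 1
  ext p
  simp only [Set.mem_ofPred_eq, Set.mem_image, Set.mem_compl_iff, eq_comm]

theorem mem_njSpan_iff {l : MvPolynomial (Fin n) A} : l ∈ NJSpan 𝒥 A ↔ IsReducedPoly 𝒥 l := by
  rw [njSpan_eq_restrictSupport, mem_restrictSupport_iff]
  exact ⟨fun h β hβ => h hβ, fun h β hβ => h β hβ⟩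

theorem tauF_eq_image (F : Term n → MvPolynomial (Fin n) A) :
    tauF 𝒥 𝒥.tau F = (fun p => monomial p.2 1 * F p.1) '' {p | 𝒥.IsConePair p} := by
  ext g
  simp only [tauF, RedStruct.IsConePair, Set.mem_ofPred_eq, Set.mem_image, Prod.exists]
  exact ⟨fun ⟨α, hα, η, hη, h⟩ => ⟨α, η, ⟨hα, hη⟩, h.symm⟩,
    fun ⟨α, η, ⟨hα, hη⟩, h⟩ => ⟨α, hα, η, hη, h.symm⟩⟩

theorem monomial_mul_mem_tauSpan (F : Term n → MvPolynomial (Fin n) A) {α η : Term n}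
    (hα : α ∈ 𝒥.M) (hη : η ∈ 𝒥.tau α) (a : A) : monomial η a * F α ∈ tauSpan 𝒥 𝒥.tau F := by
  rw [show monomial η a * F α = a • (monomial η 1 * F α) by
    rw [← smul_mul_assoc, smul_monomial, smul_eq_mul, mul_one]]
  exact Submodule.smul_mem _ a (Submodule.subset_span ⟨α, hα, η, hη, rfl⟩)

theorem sub_mem_tauSpan_of_redStar {F : Term n → MvPolynomial (Fin n) A}
    {g l : MvPolynomial (Fin n) A} (h : RedStar 𝒥 F g l) : g - l ∈ tauSpan 𝒥 𝒥.tau F := by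
  induction h with
  | refl => simp
  | tail _ hstep ih =>
    obtain ⟨α, hα, η, hη, -, rfl⟩ := hstep
    rw [sub_sub_eq_add_sub, add_sub_right_comm]
    exact add_mem ih (monomial_mul_mem_tauSpan F hα hη _)

/-- A `→_{F𝒥}`-minimal successor of `g` is reduced, because the cones cover `J`. -/
theorem exists_redStar_isReducedPoly {F : Term n → MvPolynomial (Fin n) A}
    (hF : RelNoetherian (Red 𝒥 F)) (g : MvPolynomial (Fin n) A) :
    ∃ l, RedStar 𝒥 F g l ∧ IsReducedPoly 𝒥 l := by
  have hwf : WellFounded (flip (Red 𝒥 F)) :=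
    wellFounded_iff_isEmpty_descending_chain.mpr ⟨fun ⟨f, hf⟩ => hF ⟨f, hf⟩⟩
  obtain ⟨l, hgl, hmin⟩ := hwf.has_min {l | RedStar 𝒥 F g l} ⟨g, .refl⟩
  refine ⟨l, hgl, fun β hβ hJ => ?_⟩
  obtain ⟨α, hα, η, hη, rfl⟩ := (𝒥.cover β).mp hJ
  have hstep : Red 𝒥 F l _ := ⟨α, hα, η, hη, mem_support_iff.mp hβ, rfl⟩
  exact hmin _ (hgl.tail hstep) hstep

theorem sup_eq_top_of_isSubstructure {𝒥' : RedStruct n} (hsub : 𝒥'.IsSubstructure 𝒥)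
    {F : Term n → MvPolynomial (Fin n) A} (hF : RelNoetherian (Red 𝒥' F)) :
    tauSpan 𝒥 𝒥.tau F ⊔ NJSpan 𝒥 A = ⊤ := by
  refine Submodule.eq_top_iff'.mpr fun g => ?_
  obtain ⟨l, hgl, hl⟩ := exists_redStar_isReducedPoly hF g
  rw [← sub_add_cancel g l]
  refine add_mem (Submodule.mem_sup_left (hsub.tauSpan_le F (sub_mem_tauSpan_of_redStar hgl)))
    (Submodule.mem_sup_right (mem_njSpan_iff.mpr ?_))
  rwa [IsReducedPoly, ← hsub.idealJ_eq]

end Reduction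

section MarkedSet

variable {𝒥 : RedStruct n} {A : Type*} [CommRing A] {F : Term n → MvPolynomial (Fin n) A}

theorem IsMarkedSet.coeff_head (hF : IsMarkedSet 𝒥 F) {p : Term n × Term n} (hp : p.1 ∈ 𝒥.M) :
    coeff (p.1 + p.2) (monomial p.2 1 * F p.1) = 1 := by
  rw [coeff_monomial_mul', if_pos le_add_self, add_tsub_cancel_right, one_mul, (hF p.1 hp).1]

theorem IsMarkedSet.coeff_head_eq_zero (hF : IsMarkedSet 𝒥 F) (hdc : 𝒥.hasDisjointCones)
    {p q : Term n × Term n} (hp : 𝒥.IsConePair p) (hq : 𝒥.IsConePair q) (hpq : p ≠ q)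
    (h : ¬ 𝒥.TailEdge p q) : coeff (q.1 + q.2) (monomial p.2 1 * F p.1) = 0 := by
  rw [coeff_monomial_mul', one_mul]
  split_ifs with hle
  · by_contra hne
    rcases (hF p.1 hp.1).2 _ hne with hhead | htail
    · refine hpq (RedStruct.eq_of_head_eq hdc hp hq ?_)
      rw [← hhead, tsub_add_cancel_of_le hle]
    · exact h ⟨hp, hq, hle, htail⟩
  · rfl

variable (𝒥 A) in
/-- Erasing `α` matters only when `τ_α = ∅`, where `λ_α` may contain `α`. -/
noncomputable def negTailMarkedSet (α : Term n) : MvPolynomial (Fin n) A :=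
  monomial α 1 - ∑ γ ∈ (𝒥.lam α).erase α, monomial γ 1

theorem coeff_negTailMarkedSet (α β : Term n) :
    coeff β (negTailMarkedSet 𝒥 A α) = if β = α then 1 else if β ∈ 𝒥.lam α then -1 else 0 := by
  simp only [negTailMarkedSet, coeff_sub, coeff_sum, coeff_monomial, Finset.sum_ite_eq',
    Finset.mem_erase]
  split_ifs <;> simp_all

theorem isMarkedSet_negTailMarkedSet : IsMarkedSet 𝒥 (negTailMarkedSet 𝒥 A) := by
  refine fun α _ => ⟨by simp [coeff_negTailMarkedSet], fun β hβ => ?_⟩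
  rw [coeff_negTailMarkedSet] at hβ
  split_ifs at hβ with h1 h2
  exacts [Or.inl h1, Or.inr h2, absurd rfl hβ]

open scoped Classical in
theorem coeff_head_negTailMarkedSet (hdc : 𝒥.hasDisjointCones) {p q : Term n × Term n}
    (hp : 𝒥.IsConePair p) (hq : 𝒥.IsConePair q) :
    coeff (q.1 + q.2) (monomial p.2 1 * negTailMarkedSet 𝒥 A p.1) =
      (if p = q then 1 else 0) - if 𝒥.TailEdge p q then 1 else 0 := by
  by_cases hpq : p = q
  · subst hpq
    rw [isMarkedSet_negTailMarkedSet.coeff_head hp.1, if_pos rfl,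
      if_neg (RedStruct.not_tailEdge_self p), sub_zero]
  by_cases he : 𝒥.TailEdge p q
  · have hne : q.1 + q.2 - p.2 ≠ p.1 := fun h =>
      hpq (RedStruct.eq_of_head_eq hdc hp hq (by rw [← h, tsub_add_cancel_of_le he.2.2.1]))
    rw [coeff_monomial_mul', if_pos he.2.2.1, coeff_negTailMarkedSet, if_neg hne,
      if_pos he.2.2.2, if_neg hpq, if_pos he]
    ring
  · rw [isMarkedSet_negTailMarkedSet.coeff_head_eq_zero hdc hp hq hpq he, if_neg hpq, if_neg he,
      sub_zero]

end MarkedSet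

section Cycles

variable {A : Type*} [CommRing A] {𝒥 : RedStruct n}

/-- Starting from `x^{β₀}`, `β₀` the head of `f 0`, reduce at `f 0, f 1, …` in turn: after `m`
steps, among the heads of the cycle only the head of `f m` carries a coefficient, namely `1`. -/
theorem not_isChordless_tailEdge [Nontrivial A] (hdc : 𝒥.hasDisjointCones)
    (hnoe : 𝒥.IsNoetherianOver A) {f : ℕ → Term n × Term n}
    (hedge : ∀ j, 𝒥.TailEdge (f j) (f (j + 1))) : ¬ Relation.IsChordless 𝒥.TailEdge f := by
  classical
  intro hchord
  set G := negTailMarkedSet 𝒥 A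
  have hcone : ∀ j, 𝒥.IsConePair (f j) := fun j => (hedge j).1
  set X : ℕ → MvPolynomial (Fin n) A := fun m =>
    monomial ((f 0).1 + (f 0).2) 1 - ∑ i ∈ Finset.range m, monomial (f i).2 1 * G (f i).1
  have hX_succ : ∀ m, X (m + 1) = X m - monomial (f m).2 1 * G (f m).1 := fun m => by
    simp only [X, Finset.sum_range_succ, sub_add_eq_sub_sub]
  have hcoeff : ∀ m j, coeff ((f j).1 + (f j).2) (X m) = if f m = f j then 1 else 0 := by
    intro m
    induction m with
    | zero =>
      intro j
      simp only [X, Finset.range_zero, Finset.sum_empty, sub_zero, coeff_monomial]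
      exact if_congr ⟨RedStruct.eq_of_head_eq hdc (hcone 0) (hcone j), fun h => h ▸ rfl⟩
        rfl rfl
    | succ m ih =>
      intro j
      have hedge_iff : 𝒥.TailEdge (f m) (f j) ↔ f (m + 1) = f j :=
        ⟨fun h => (hchord m j h).symm, fun h => h ▸ hedge m⟩
      rw [hX_succ, coeff_sub, ih, coeff_head_negTailMarkedSet hdc (hcone m) (hcone j),
        sub_sub_cancel, if_congr hedge_iff rfl rfl]
  refine hnoe G isMarkedSet_negTailMarkedSet ⟨X, fun m => ?_⟩
  have hm : coeff ((f m).1 + (f m).2) (X m) = 1 := by rw [hcoeff, if_pos rfl]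
  exact ⟨(f m).1, (hcone m).1, (f m).2, (hcone m).2, hm ▸ one_ne_zero, by rw [hm, hX_succ]⟩

theorem not_isCycle_tailEdge [Nontrivial A] (hdc : 𝒥.hasDisjointCones)
    (hnoe : 𝒥.IsNoetherianOver A) {f : ℕ → Term n × Term n} {P : ℕ} :
    ¬ Relation.IsCycle 𝒥.TailEdge f P := fun hf =>
  let ⟨_, hedge, hchord⟩ := hf.exists_isChordless
  not_isChordless_tailEdge hdc hnoe hedge hchord

theorem eq_zero_of_mem_tauSpan_of_isReducedPoly (hdc : 𝒥.hasDisjointCones)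
    (hnoe : 𝒥.IsNoetherianOver A) {F : Term n → MvPolynomial (Fin n) A} (hF : IsMarkedSet 𝒥 F)
    {x : MvPolynomial (Fin n) A} (hx : x ∈ tauSpan 𝒥 𝒥.tau F) (hxr : IsReducedPoly 𝒥 x) :
    x = 0 := by
  nontriviality A
  rw [tauSpan, tauF_eq_image, Finsupp.mem_span_image_iff_linearCombination] at hx
  obtain ⟨c, hc, rfl⟩ := hx
  have hcone : ∀ p ∈ c.support, 𝒥.IsConePair p := fun p hp => (Finsupp.mem_supported _ _).mp hc hp
  have hpred : ∀ q ∈ c.support, ∃ p ∈ c.support, 𝒥.TailEdge p q := by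
    intro q hq
    by_contra! hnone
    have hcoeff : coeff (q.1 + q.2) (Finsupp.linearCombination A
        (fun p : Term n × Term n => monomial p.2 1 * F p.1) c) = c q := by
      rw [Finsupp.linearCombination_apply, Finsupp.sum, coeff_sum,
        Finset.sum_eq_single_of_mem q hq fun p hp hpq => ?_, coeff_smul,
        hF.coeff_head (hcone q hq).1, smul_eq_mul, mul_one]
      rw [coeff_smul, hF.coeff_head_eq_zero hdc (hcone p hp) (hcone q hq) hpq (hnone p hp),
        smul_zero]
    refine Finsupp.mem_support_iff.mp hq ?_
    rw [← hcoeff]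
    by_contra hne
    exact hxr _ (mem_support_iff.mpr hne) (hcone q hq).head_mem_idealJ
  obtain rfl : c = 0 := by
    refine Finsupp.support_eq_empty.mp (Finset.not_nonempty_iff_eq_empty.mp fun hne => ?_)
    obtain ⟨f, P, hf⟩ := Relation.exists_isCycle_of_forall_exists_pred hne hpred
    exact not_isCycle_tailEdge hdc hnoe hf
  exact map_zero _

end Cycles

section DirectSum

variable {A : Type*} [CommRing A] {𝒥 : RedStruct n} {F : Term n → MvPolynomial (Fin n) A}

theorem disjoint_tauSpan_njSpan (hdc : 𝒥.hasDisjointCones) (hnoe : 𝒥.IsNoetherianOver A)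
    (hF : IsMarkedSet 𝒥 F) : Disjoint (tauSpan 𝒥 𝒥.tau F) (NJSpan 𝒥 A) :=
  Submodule.disjoint_def.mpr fun _ hx hxN =>
    eq_zero_of_mem_tauSpan_of_isReducedPoly hdc hnoe hF hx (mem_njSpan_iff.mp hxN)

theorem redStar_iff_sub_mem_tauSpan (hdc : 𝒥.hasDisjointCones) (hnoe : 𝒥.IsNoetherianOver A)
    (hF : IsMarkedSet 𝒥 F) {g l : MvPolynomial (Fin n) A} (hl : IsReducedPoly 𝒥 l) :
    RedStar 𝒥 F g l ↔ g - l ∈ tauSpan 𝒥 𝒥.tau F := by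
  refine ⟨sub_mem_tauSpan_of_redStar, fun hgl => ?_⟩
  obtain ⟨l', hgl', hl'⟩ := exists_redStar_isReducedPoly (hnoe F hF) g
  have hdiff : l' - l ∈ tauSpan 𝒥 𝒥.tau F := by
    rw [← sub_sub_sub_cancel_left l l' g]
    exact sub_mem hgl (sub_mem_tauSpan_of_redStar hgl')
  have hdiffN : l' - l ∈ NJSpan 𝒥 A :=
    sub_mem (mem_njSpan_iff.mpr hl') (mem_njSpan_iff.mpr hl)
  rwa [← sub_eq_zero.mp (Submodule.disjoint_def.mp (disjoint_tauSpan_njSpan hdc hnoe hF) _ hdiff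
    hdiffN)]

end DirectSum

/-- over a weakly noetherian RS, `⟨τF⟩ + ⟨N(J)⟩ = P`; if moreover the cones
are disjoint then `⟨τF⟩ ⊕ ⟨N(J)⟩ = P` and for reduced `l`: `g − l ∈ ⟨τF⟩ ↔ g →_* l`. -/
theorem stmt6 {n : ℕ} {A : Type} [CommRing A] (𝒥 : RedStruct n)
    (hwn : 𝒥.IsWeaklyNoetherianOver A)
    (F : Term n → MvPolynomial (Fin n) A) (hF : IsMarkedSet 𝒥 F) :
    (tauSpan 𝒥 𝒥.tau F ⊔ NJSpan 𝒥 A = ⊤) ∧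
    (𝒥.hasDisjointCones →
      IsCompl (tauSpan 𝒥 𝒥.tau F) (NJSpan 𝒥 A) ∧
      ∀ g l : MvPolynomial (Fin n) A, IsReducedPoly 𝒥 l →
        (g - l ∈ tauSpan 𝒥 𝒥.tau F ↔ RedStar 𝒥 F g l)) := by
  have hsup : tauSpan 𝒥 𝒥.tau F ⊔ NJSpan 𝒥 A = ⊤ := by
    obtain ⟨𝒥', hsub, hnoe'⟩ := hwn
    exact sup_eq_top_of_isSubstructure hsub (hnoe' F (hsub.isMarkedSet_iff.mpr hF))
  refine ⟨hsup, fun hdc => ?_⟩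
  have hnoe := hwn.isNoetherianOver hdc
  exact ⟨⟨disjoint_tauSpan_njSpan hdc hnoe hF, codisjoint_iff.mpr hsup⟩,
    fun g l hl => (redStar_iff_sub_mem_tauSpan hdc hnoe hF hl).symm⟩
end

section
/- If 𝒥 = (M, λ, τ) is a reduction structure with maximal cones (τ_α = 𝒯 for all x^α ∈ M), then there exists a substructure 𝒥' = (M, λ, τ') of 𝒥 (so each τ'_α ⊆ τ_α is an order ideal and ⋃_{x^α ∈ M} x^α τ'_α = J) which has disjoint cones. -/
/-!
Fix a well-order on the terms and let `x^η` be multiplicative for `x^α` exactly when `x^α` is the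
least element of `M` dividing `x^{α+η}`. Each term of `J` has exactly one least divisor in `M`,
so these cones cover `J` and are pairwise disjoint; and since a divisor of `x^{α+η'}` with
`η' ≤ η` also divides `x^{α+η}`, the multiplicative sets are order ideals.
-/

open MvPolynomial

variable {n : ℕ}

def leastDivisorTau (M : Set (Term n)) (α : Term n) : Set (Term n) :=
  {η | ∀ α' ∈ M, α' ≤ α + η → ¬ WellOrderingRel α' α}

lemma isLowerSet_leastDivisorTau (M : Set (Term n)) (α : Term n) :
    IsLowerSet (leastDivisorTau M α) :=
  fun _ _ hle hη α' hα' hdvd => hη α' hα' (hdvd.trans (add_le_add_right hle α))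

lemma exists_add_mem_leastDivisorTau {M : Set (Term n)} {α β : Term n} (hα : α ∈ M)
    (hdvd : α ≤ β) : ∃ α' ∈ M, ∃ η ∈ leastDivisorTau M α', β = α' + η := by
  have wf : WellFounded (WellOrderingRel : Term n → Term n → Prop) := IsWellFounded.wf
  have hne : {γ | γ ∈ M ∧ γ ≤ β}.Nonempty := ⟨α, hα, hdvd⟩
  set α₀ := wf.min {γ | γ ∈ M ∧ γ ≤ β} hne
  obtain ⟨hα₀, hα₀β⟩ : α₀ ∈ M ∧ α₀ ≤ β := wf.min_mem _ hne
  refine ⟨α₀, hα₀, β - α₀, fun α' hα' hα'β => ?_, (add_tsub_cancel_of_le hα₀β).symm⟩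
  rw [add_tsub_cancel_of_le hα₀β] at hα'β
  exact wf.not_lt_min {γ | γ ∈ M ∧ γ ≤ β} (x := α') ⟨hα', hα'β⟩

lemma eq_of_add_mem_leastDivisorTau {M : Set (Term n)} {α α' η η' : Term n} (hα : α ∈ M)
    (hα' : α' ∈ M) (hη : η ∈ leastDivisorTau M α) (hη' : η' ∈ leastDivisorTau M α')
    (h : α + η = α' + η') : α = α' := by
  rcases trichotomous_of (WellOrderingRel : Term n → Term n → Prop) α α' with hlt | heq | hgt
  · exact absurd hlt (hη' α hα (h ▸ self_le_add_right α η))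
  · exact heq
  · exact absurd hgt (hη α' hα' (h ▸ self_le_add_right α' η'))

namespace RedStruct

def leastDivisorSubstructure (𝒥 : RedStruct n) (hmax : 𝒥.hasMaximalCones) : RedStruct n where
  M := 𝒥.M
  tau := leastDivisorTau 𝒥.M
  lam := 𝒥.lam
  tau_orderIdeal _ _ _ hη _ hle := isLowerSet_leastDivisorTau _ _ hle hη
  cover β := by
    constructor
    · rintro ⟨α, hα, η, rfl⟩
      exact exists_add_mem_leastDivisorTau hα (self_le_add_right α η)
    · rintro ⟨α, hα, η, -, rfl⟩
      exact ⟨α, hα, η, rfl⟩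
  lam_tail α hα γ hγ := fun ⟨η, _, hγη⟩ =>
    𝒥.lam_tail α hα γ hγ ⟨η, hmax α hα ▸ Set.mem_univ η, hγη⟩

lemma leastDivisorSubstructure_isSubstructure (𝒥 : RedStruct n) (hmax : 𝒥.hasMaximalCones) :
    (𝒥.leastDivisorSubstructure hmax).IsSubstructure 𝒥 :=
  ⟨rfl, rfl, fun α hα => hmax α hα ▸ Set.subset_univ _⟩

lemma leastDivisorSubstructure_hasDisjointCones (𝒥 : RedStruct n)
    (hmax : 𝒥.hasMaximalCones) : (𝒥.leastDivisorSubstructure hmax).hasDisjointCones := by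
  intro α hα α' hα' hne
  refine Set.eq_empty_of_forall_notMem fun β ⟨⟨η, hη, hβ⟩, ⟨η', hη', hβ'⟩⟩ => hne ?_
  exact eq_of_add_mem_leastDivisorTau hα hα' hη hη' (hβ.symm.trans hβ')

end RedStruct

/-- a reduction structure with maximal cones has a substructure with
disjoint cones. -/
theorem stmt8 {n : ℕ} (𝒥 : RedStruct n) (hmax : 𝒥.hasMaximalCones) :
    ∃ 𝒥' : RedStruct n, RedStruct.IsSubstructure 𝒥' 𝒥 ∧ 𝒥'.hasDisjointCones :=
  ⟨𝒥.leastDivisorSubstructure hmax, 𝒥.leastDivisorSubstructure_isSubstructure hmax,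
    𝒥.leastDivisorSubstructure_hasDisjointCones hmax⟩
end

section
/- Let 𝒥 = (M, λ, τ) be a weakly noetherian reduction structure. Then there is a family of sets of terms τ̄ = {τ̄_α}_{x^α ∈ M} with τ̄_α ⊆ τ_α such that: (a) for all distinct x^α, x^{α'} ∈ M, x^α τ̄_α ∩ x^{α'} τ̄_{α'} = ∅; (b) ⋃_{x^α ∈ M} x^α τ̄_α = J; (c) for every marked set F on 𝒥, the reduction process →_{τ̄F} which uses only the polynomials τ̄F := {x^η f_α : x^α ∈ M, x^η ∈ τ̄_α} is noetherian (every sequence of such reduction steps terminates). -/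
open MvPolynomial

variable {n : ℕ}

/-!
Pass to a noetherian substructure `𝒥'`. Its cones still cover `J`; choosing for every term of
`J` one decomposition `α + η` with `η ∈ τ'_α` and keeping in `τ̄_α` only the chosen `η` gives
disjoint cones with the same union. Since `τ̄ ⊆ τ'`, every `τ̄F`-reduction is a
`→_{F𝒥'}`-reduction, so it terminates.
-/

section Shifted

variable {X : Type*} [Add X]

/-- `x^α s` in multiplicative notation. -/
def shifted (α : X) (s : Set X) : Set X := {β | ∃ η ∈ s, β = α + η}

theorem exists_subfamily_shifted_pairwiseDisjoint (M : Set X) (σ : X → Set X) :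
    ∃ σb : X → Set X, (∀ α, σb α ⊆ σ α) ∧
      (∀ α ∈ M, ∀ α' ∈ M, α ≠ α' → shifted α (σb α) ∩ shifted α' (σb α') = ∅) ∧
      ⋃ α ∈ M, shifted α (σb α) = ⋃ α ∈ M, shifted α (σ α) := by
  set IsDecomp : X → X × X → Prop := fun β p => p.1 ∈ M ∧ p.2 ∈ σ p.1 ∧ β = p.1 + p.2
  have hchoice : ∀ β, ∃ p, (∃ q, IsDecomp β q) → IsDecomp β p := fun β =>
    (em _).elim (fun ⟨q, hq⟩ => ⟨q, fun _ => hq⟩) fun h => ⟨(β, β), fun h' => (h h').elim⟩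
  choose rep hrep using hchoice
  refine ⟨fun α => {η | η ∈ σ α ∧ rep (α + η) = (α, η)}, fun α η hη => hη.1, ?_, ?_⟩
  · rintro α - α' - hne
    refine Set.eq_empty_of_forall_notMem ?_
    rintro β ⟨⟨η, ⟨-, hrepη⟩, rfl⟩, ⟨η', ⟨-, hrepη'⟩, hβ⟩⟩
    rw [hβ, hrepη'] at hrepη
    exact hne (congrArg Prod.fst hrepη).symm
  · refine subset_antisymm (Set.biUnion_mono le_rfl fun α _ => ?_) ?_
    · rintro β ⟨η, hη, rfl⟩
      exact ⟨η, hη.1, rfl⟩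
    · simp only [Set.subset_def, Set.mem_iUnion]
      rintro β ⟨α, hα, η, hη, rfl⟩
      obtain ⟨hα', hη', hβ⟩ := hrep (α + η) ⟨(α, η), hα, hη, rfl⟩
      exact ⟨_, hα', _, ⟨hη', by rw [← hβ]⟩, hβ⟩

end Shifted

theorem RelNoetherian.mono {X : Type*} {r r' : X → X → Prop} (h : ∀ a b, r a b → r' a b)
    (hr' : RelNoetherian r') : RelNoetherian r :=
  fun ⟨f, hf⟩ => hr' ⟨f, fun i => h _ _ (hf i)⟩

namespace RedStruct

variable {n : ℕ}

theorem biUnion_shifted_tau (𝒥 : RedStruct n) :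
    ⋃ α ∈ (𝒥.M : Set (Term n)), shifted α (𝒥.tau α) = 𝒥.idealJ := by
  ext β
  simp only [Set.mem_iUnion, Finset.mem_coe, exists_prop]
  exact (𝒥.cover β).symm

theorem idealJ_congr {𝒥 𝒥' : RedStruct n} (hM : 𝒥'.M = 𝒥.M) : 𝒥'.idealJ = 𝒥.idealJ := by
  simp only [idealJ, hM]

theorem IsSubstructure.isMarkedSet_iff_s9 {A : Type*} [CommRing A] {𝒥' 𝒥 : RedStruct n}
    (h : 𝒥'.IsSubstructure 𝒥) {F : Term n → MvPolynomial (Fin n) A} :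
    IsMarkedSet 𝒥' F ↔ IsMarkedSet 𝒥 F := by
  simp only [IsMarkedSet, h.1, h.2.1]

end RedStruct

theorem RedStep.mono {n : ℕ} {A : Type*} [CommRing A] {𝒥 𝒥' : RedStruct n}
    {σ σ' : Term n → Set (Term n)} {F : Term n → MvPolynomial (Fin n) A}
    {g h : MvPolynomial (Fin n) A} (hM : 𝒥.M ⊆ 𝒥'.M) (hσ : ∀ α ∈ 𝒥.M, σ α ⊆ σ' α)
    (hstep : RedStep 𝒥 σ F g h) : RedStep 𝒥' σ' F g h := by
  obtain ⟨α, hα, η, hη, hcoeff, rfl⟩ := hstep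
  exact ⟨α, hM hα, η, hσ α hα hη, hcoeff, rfl⟩

/-- for a weakly noetherian RS there is a family `τ̄` of subsets of `τ`
with pairwise disjoint translated cones covering `J` such that, for every marked set `F`,
the reduction using only `τ̄F` is noetherian. -/
theorem stmt9 {n : ℕ} {A : Type} [CommRing A] (𝒥 : RedStruct n)
    (hwn : 𝒥.IsWeaklyNoetherianOver A) :
    ∃ τb : Term n → Set (Term n),
      (∀ α ∈ 𝒥.M, τb α ⊆ 𝒥.tau α) ∧
      (∀ α ∈ 𝒥.M, ∀ α' ∈ 𝒥.M, α ≠ α' →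
        {β : Term n | ∃ η ∈ τb α, β = α + η} ∩ {β : Term n | ∃ η ∈ τb α', β = α' + η} = ∅) ∧
      (⋃ α ∈ 𝒥.M, {β : Term n | ∃ η ∈ τb α, β = α + η}) = 𝒥.idealJ ∧
      ∀ F : Term n → MvPolynomial (Fin n) A, IsMarkedSet 𝒥 F →
        RelNoetherian (RedStep 𝒥 τb F) := by
  obtain ⟨𝒥', hsubstr, hnoeth⟩ := hwn
  have ⟨hM, _, htau⟩ := hsubstr
  obtain ⟨τb, hτb, hdisjoint, hunion⟩ :=
    exists_subfamily_shifted_pairwiseDisjoint (𝒥'.M : Set (Term n)) 𝒥'.tau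
  rw [hM] at hdisjoint hunion
  refine ⟨τb, fun α hα => (hτb α).trans (htau α hα), hdisjoint, ?_, fun F hF => ?_⟩
  · rw [← RedStruct.idealJ_congr hM, ← RedStruct.biUnion_shifted_tau, hM]
    exact hunion
  · exact (hnoeth F (hsubstr.isMarkedSet_iff_s9.2 hF)).mono
      fun g h => RedStep.mono hM.ge fun α _ => hτb α
end
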